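/- Let A = ℂ[a, b, x, y, z] and let ξ be the ℂ-derivation of A defined by ξ(a) = 0, ξ(b) = 0, ξ(x) = a², ξ(y) = ax + b, ξ(z) = y, extended uniquely (by the quotient rule) to a derivation ξ̂ of the rational function field ℂ(a, b, x, y, z). Set I₁ = a, I₂ = b, I₃ = ax² + 2bx − 2a²y, I₄ = 2ax³ + 3bx² − 6a²xy + 6a⁴z. Then a rational function f ∈ ℂ(a, b, x, y, z) satisfies ξ̂(f) = 0 if and only if f lies in the subfield ℂ(I₁, I₂, I₃, I₄). That is, I₁, I₂, I₃, I₄ generate the field of rational absolute invariants of ξ. -/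

import Mathlib

/-! In the coordinates `a, b, x, y' = I₃, z' = I₄` the derivation `ξ` becomes `a² ∂/∂x`.
The substitution `y ↦ I₃, z ↦ I₄` is triangular with leading coefficients `-2a²` and `6a⁴`, so it
is invertible after inverting `a`; hence `ℂ(a, b, x, y, z)` is the fraction field of
`R[x]`, `R = ℂ[a, b, y', z']`, and `ξ̂` acts on it as the extension of `a² ∂/∂x`. The constants
of `a² ∂/∂x` in `Frac R[x]` are `Frac R`, which is `ℂ(I₁, I₂, I₃, I₄)`. -/

open MvPolynomial

/-- The polynomial ring `A = ℂ[a, b, x, y, z]`, with variable indices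
`0 ↦ a`, `1 ↦ b`, `2 ↦ x`, `3 ↦ y`, `4 ↦ z`. -/
abbrev A5 : Type := MvPolynomial (Fin 5) ℂ

/-- The rational function field `ℂ(a, b, x, y, z)`. -/
abbrev K5 : Type := FractionRing A5

/-- The embedding `A → ℂ(a, b, x, y, z)`. -/
noncomputable def ι : A5 →+* K5 := algebraMap A5 K5

/-- `I₁ = a`. -/
noncomputable def I1 : A5 := X 0
/-- `I₂ = b`. -/
noncomputable def I2 : A5 := X 1
/-- `I₃ = ax² + 2bx − 2a²y`. -/
noncomputable def I3 : A5 := X 0 * X 2 ^ 2 + 2 * X 1 * X 2 - 2 * X 0 ^ 2 * X 3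
/-- `I₄ = 2ax³ + 3bx² − 6a²xy + 6a⁴z`. -/
noncomputable def I4 : A5 :=
  2 * X 0 * X 2 ^ 3 + 3 * X 1 * X 2 ^ 2 - 6 * X 0 ^ 2 * X 2 * X 3 + 6 * X 0 ^ 4 * X 4

open scoped Polynomial

namespace Polynomial

variable {R : Type*} [CommRing R]

theorem derivative_eq_zero_of_isRelPrime [NoZeroDivisors R] [DecompositionMonoid R[X]]
    {g h : R[X]} (hgh : IsRelPrime g h) (hwr : derivative g * h = g * derivative h) :
    derivative g = 0 :=
  dvd_derivative_iff.mp (hgh.dvd_of_dvd_mul_right ⟨derivative h, hwr⟩)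

theorem derivation_eval₂ {S A M : Type*} [CommSemiring S] [CommRing A] [Algebra S A]
    [AddCommGroup M] [Module A M] [Module S M] [IsScalarTower S A M]
    (D : Derivation S A M) {κ : R →+* A} (hκ : ∀ r, D (κ r) = 0) (t : A) (p : R[X]) :
    D (p.eval₂ κ t) = (derivative p).eval₂ κ t • D t := by
  induction p using Polynomial.induction_on with
  | C r => simp [hκ]
  | add p q hp hq => simp [hp, hq, add_smul]
  | monomial n r _ =>
    simp only [eval₂_mul, eval₂_C, eval₂_X_pow, D.leibniz, D.leibniz_pow, hκ, derivative_mul,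
      derivative_C, zero_mul, zero_add, derivative_X_pow, smul_zero, add_zero, mul_smul,
      Nat.add_sub_cancel, map_natCast, eval₂_natCast, Nat.cast_smul_eq_nsmul]

theorem exists_eq_C_div_C_of_leibniz_eq_zero {K : Type*} [IsDomain R]
    [UniqueFactorizationMonoid R] [CharZero R] [Field K] {j : R[X] →+* K}
    (hj : Function.Injective j) (hfrac : ∀ f : K, ∃ g h, f = j g / j h) {D : K → K}
    (hD : ∀ u v, D (u * v) = D u * v + u * D v) {d : K} (hd : d ≠ 0)
    (hDj : ∀ p, D (j p) = j (derivative p) * d) {f : K} (hf : D f = 0) :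
    ∃ r s : R, f = j (C r) / j (C s) := by
  obtain ⟨g₀, h₀, rfl⟩ := hfrac f
  rcases eq_or_ne h₀ 0 with rfl | hh₀
  · exact ⟨0, 1, by simp⟩
  obtain ⟨g, h, c, hgh, rfl, rfl⟩ := UniqueFactorizationMonoid.exists_reduced_factors' g₀ h₀ hh₀
  have hc : j c ≠ 0 := (map_ne_zero_iff j hj).mpr (left_ne_zero_of_mul hh₀)
  have hh : j h ≠ 0 := (map_ne_zero_iff j hj).mpr (right_ne_zero_of_mul hh₀)
  rw [map_mul, map_mul, mul_div_mul_left _ _ hc] at hf ⊢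
  -- `f = g / h` in lowest terms: `g' h = g h'` forces `g ∣ g'` and `h ∣ h'`, so `g' = h' = 0`.
  have hwr : derivative g * h = g * derivative h := by
    have hleib := hD (j g / j h) (j h)
    rw [div_mul_cancel₀ _ hh, hf, hDj, hDj, zero_mul, zero_add] at hleib
    apply hj
    field_simp at hleib
    simpa [map_mul, mul_comm] using hleib
  have hg' := derivative_eq_zero_of_isRelPrime hgh hwr
  have hh' := derivative_eq_zero_of_isRelPrime hgh.symm (by linear_combination -hwr)
  exact ⟨g.coeff 0, h.coeff 0, by
    rw [← eq_C_of_derivative_eq_zero hg', ← eq_C_of_derivative_eq_zero hh']⟩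

end Polynomial

theorem Derivation.map_ofNat {R A M : Type*} [CommSemiring R] [CommSemiring A] [Algebra R A]
    [AddCommMonoid M] [Module A M] [Module R M] (D : Derivation R A M) (n : ℕ) [n.AtLeastTwo] :
    D (no_index (OfNat.ofNat n : A)) = 0 :=
  D.map_natCast n

theorem MvPolynomial.derivation_aeval_eq_zero {R A M σ : Type*} [CommSemiring R] [CommRing A]
    [Algebra R A] [AddCommGroup M] [Module A M] [Module R M] [IsScalarTower R A M]
    (D : Derivation R A M) {v : σ → A} (hv : ∀ i, D (v i) = 0) (p : MvPolynomial σ R) :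
    D (aeval v p) = 0 := by
  induction p using MvPolynomial.induction_on with
  | C r => simp
  | add p q hp hq => simp [hp, hq]
  | mul_X p i hp => simp [hp, hv]

def constantsSubfield {K : Type*} [Field K] (D : K → K) (hadd : ∀ u v, D (u + v) = D u + D v)
    (hmul : ∀ u v, D (u * v) = D u * v + u * D v) : Subfield K where
  carrier := {u | D u = 0}
  zero_mem' := by simpa using hadd 0 0
  one_mem' := by simpa using hmul 1 1
  add_mem' {u v} hu hv := by simp_all
  mul_mem' {u v} hu hv := by simp_all
  neg_mem' {u} (hu : D u = 0) := by
    have h0 : D 0 = 0 := by simpa using hadd 0 0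
    simpa [h0, hu] using (hadd u (-u)).symm
  inv_mem' {u} (hu : D u = 0) := by
    rcases eq_or_ne u 0 with rfl | hu0
    · simpa using hadd 0 0
    have h1 : D 1 = 0 := by simpa using hmul 1 1
    simpa [hu0, hu, h1] using (hmul u u⁻¹).symm

/-- `ℂ[a, b, y', z'][x]`, with variable indices `0 ↦ a`, `1 ↦ b`, `2 ↦ y'`, `3 ↦ z'`. -/
abbrev A4X : Type := (MvPolynomial (Fin 4) ℂ)[X]

noncomputable def invariantsAeval : MvPolynomial (Fin 4) ℂ →ₐ[ℂ] A5 :=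
  aeval ![I1, I2, I3, I4]

noncomputable def coordChange : A4X →+* A5 :=
  Polynomial.eval₂RingHom invariantsAeval.toRingHom (X 2)

noncomputable def coordChangeInv : A5 →+* FractionRing A4X :=
  let ι' := algebraMap A4X (FractionRing A4X)
  let a := ι' (Polynomial.C (X 0))
  let b := ι' (Polynomial.C (X 1))
  let x := ι' Polynomial.X
  let u := ι' (Polynomial.C (X 2))
  let v := ι' (Polynomial.C (X 3))
  -- `y`, `z` solved from `I₃ = u`, `I₄ = v`
  eval₂Hom (ι'.comp (Polynomial.C.comp C))
    ![a, b, x, (a * x ^ 2 + 2 * b * x - u) / (2 * a ^ 2),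
      (v + a * x ^ 3 + 3 * b * x ^ 2 - 3 * x * u) / (6 * a ^ 4)]

theorem coordChange_C (r : MvPolynomial (Fin 4) ℂ) :
    coordChange (Polynomial.C r) = invariantsAeval r :=
  Polynomial.eval₂_C _ _

theorem coordChangeInv_comp_coordChange :
    coordChangeInv.comp coordChange = algebraMap A4X (FractionRing A4X) := by
  have ha : algebraMap A4X (FractionRing A4X) (Polynomial.C (X 0)) ≠ 0 := by simp [X_ne_zero]
  refine Polynomial.ringHom_ext' (MvPolynomial.ringHom_ext (fun c => ?_) (fun k => ?_))
    (by simp [coordChange, coordChangeInv])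
  · simp [coordChange, coordChangeInv, invariantsAeval]
  · fin_cases k <;> simp [coordChange, coordChangeInv, invariantsAeval, I1, I2, I3, I4]
    all_goals field_simp
    all_goals ring

theorem coordChange_injective : Function.Injective (ι.comp coordChange) := by
  have h : Function.Injective (coordChangeInv.comp coordChange) := by
    rw [coordChangeInv_comp_coordChange]
    exact IsFractionRing.injective A4X (FractionRing A4X)
  intro p q hpq
  exact h (congrArg coordChangeInv (IsFractionRing.injective A5 K5 hpq))

noncomputable def coordChangeFrac : FractionRing A4X →+* K5 :=
  IsFractionRing.lift coordChange_injective

theorem coordChangeFrac_algebraMap (p : A4X) :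
    coordChangeFrac (algebraMap A4X _ p) = ι (coordChange p) :=
  IsFractionRing.lift_algebraMap coordChange_injective p

theorem coordChangeFrac_comp_coordChangeInv : coordChangeFrac.comp coordChangeInv = ι := by
  have ha : ι (X 0) ≠ 0 := (map_ne_zero_iff ι (IsFractionRing.injective A5 K5)).mpr (X_ne_zero 0)
  refine MvPolynomial.ringHom_ext (fun c => ?_) (fun i => ?_)
  · simp [coordChangeInv, coordChangeFrac_algebraMap, coordChange, invariantsAeval]
  · fin_cases i <;>
      simp [coordChangeInv, coordChangeFrac_algebraMap, coordChange, invariantsAeval, I1, I2, I3, I4,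
        map_ofNat]
    all_goals field_simp
    all_goals ring

theorem exists_eq_coordChange_div (f : K5) :
    ∃ g h : A4X, f = ι (coordChange g) / ι (coordChange h) := by
  obtain ⟨p, q, -, rfl⟩ := IsFractionRing.div_surjective A5 f
  obtain ⟨g, h, -, hgh⟩ := IsFractionRing.div_surjective A4X (coordChangeInv p / coordChangeInv q)
  refine ⟨g, h, ?_⟩
  calc ι p / ι q = coordChangeFrac (coordChangeInv p / coordChangeInv q) := by
        rw [map_div₀, ← RingHom.comp_apply, ← RingHom.comp_apply,
          coordChangeFrac_comp_coordChangeInv]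
    _ = ι (coordChange g) / ι (coordChange h) := by
        rw [← hgh, map_div₀, coordChangeFrac_algebraMap, coordChangeFrac_algebraMap]

section Invariants

variable (ξ : Derivation ℂ A5 A5)
    (ha : ξ (X 0) = 0) (hb : ξ (X 1) = 0) (hx : ξ (X 2) = X 0 ^ 2)
    (hy : ξ (X 3) = X 0 * X 2 + X 1) (hz : ξ (X 4) = X 3)

include ha hb hx hy in
theorem derivation_I3_eq_zero : ξ I3 = 0 := by
  simp [Derivation.map_ofNat, I3, ha, hb, hx, hy]
  ring

include ha hb hx hy hz in
theorem derivation_I4_eq_zero : ξ I4 = 0 := by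
  simp [Derivation.map_ofNat, I4, ha, hb, hx, hy, hz]
  ring

include ha hb hx hy hz in
theorem derivation_coordChange (p : A4X) :
    ξ (coordChange p) = coordChange (Polynomial.derivative p) * X 0 ^ 2 := by
  have hinv : ∀ k, ξ (![I1, I2, I3, I4] k) = 0 := by
    intro k
    fin_cases k
    exacts [ha, hb, derivation_I3_eq_zero ξ ha hb hx hy, derivation_I4_eq_zero ξ ha hb hx hy hz]
  have hκ : ∀ r, ξ (invariantsAeval r) = 0 := MvPolynomial.derivation_aeval_eq_zero ξ hinv
  rw [← hx, ← smul_eq_mul]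
  exact Polynomial.derivation_eval₂ ξ (κ := invariantsAeval.toRingHom) hκ (X 2) p

end Invariants

theorem ι_invariantsAeval_mem (r : MvPolynomial (Fin 4) ℂ) :
    ι (invariantsAeval r) ∈
      Subfield.closure ((Set.range fun c : ℂ => ι (C c)) ∪ {ι I1, ι I2, ι I3, ι I4}) := by
  rw [invariantsAeval, aeval_def, eval₂_comp_left]
  apply eval₂_mem
  · exact fun _ _ => Subfield.subset_closure (Or.inl ⟨_, rfl⟩)
  · intro k
    apply Subfield.subset_closure
    fin_cases k <;> simp

/-- Let `ξ` be the ℂ-derivation of `A = ℂ[a, b, x, y, z]` with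
`ξ(a) = 0`, `ξ(b) = 0`, `ξ(x) = a²`, `ξ(y) = ax + b`, `ξ(z) = y`, and let `ξ̂` be its
unique extension (by the quotient rule) to a derivation of the rational function field
`ℂ(a, b, x, y, z)`.  Then `ξ̂(f) = 0` if and only if `f` lies in the subfield
`ℂ(I₁, I₂, I₃, I₄)`: these four invariants generate the field of rational absolute
invariants of `ξ`. -/
theorem rational_invariants_field_generated
    (ξ : Derivation ℂ A5 A5)
    (ha : ξ (X 0) = 0) (hb : ξ (X 1) = 0) (hx : ξ (X 2) = X 0 ^ 2)
    (hy : ξ (X 3) = X 0 * X 2 + X 1) (hz : ξ (X 4) = X 3)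
    (ξ' : K5 → K5)
    (hadd : ∀ f g : K5, ξ' (f + g) = ξ' f + ξ' g)
    (hmul : ∀ f g : K5, ξ' (f * g) = ξ' f * g + f * ξ' g)
    (hext : ∀ p : A5, ξ' (ι p) = ι (ξ p)) :
    ∀ f : K5,
      ξ' f = 0 ↔
      f ∈ Subfield.closure
        ((Set.range fun c : ℂ => ι (C c)) ∪ {ι I1, ι I2, ι I3, ι I4}) := by
  intro f
  constructor
  · intro hf
    have hd : ι (X 0 ^ 2) ≠ 0 :=
      (map_ne_zero_iff ι (IsFractionRing.injective A5 K5)).mpr (pow_ne_zero 2 (X_ne_zero 0))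
    have hDj (p : A4X) :
        ξ' (ι (coordChange p)) = ι (coordChange (Polynomial.derivative p)) * ι (X 0 ^ 2) := by
      rw [hext, derivation_coordChange ξ ha hb hx hy hz, map_mul]
    obtain ⟨r, s, rfl⟩ := Polynomial.exists_eq_C_div_C_of_leibniz_eq_zero coordChange_injective
      exists_eq_coordChange_div hmul hd hDj hf
    simp only [RingHom.comp_apply, coordChange_C]
    exact Subfield.div_mem _ (ι_invariantsAeval_mem r) (ι_invariantsAeval_mem s)
  · refine fun hmem => (Subfield.closure_le (t := constantsSubfield ξ' hadd hmul)).mpr ?_ hmem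
    rintro _ (⟨c, rfl⟩ | h)
    · exact (hext _).trans (by rw [show ξ (C c) = 0 from ξ.map_algebraMap c, map_zero])
    · simp only [Set.mem_insert_iff, Set.mem_singleton_iff] at h
      rcases h with rfl | rfl | rfl | rfl <;> refine (hext _).trans ?_
      · rw [I1, ha, map_zero]
      · rw [I2, hb, map_zero]
      · rw [derivation_I3_eq_zero ξ ha hb hx hy, map_zero]
      · rw [derivation_I4_eq_zero ξ ha hb hx hy hz, map_zero]
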